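/- There exist an integer K > 1 and finite simple graphs G1, G2 with the same number of vertices such that the multisets {{A^{K,spd}_{v,G1} : v ∈ V(G1)}} and {{A^{K,spd}_{v,G2} : v ∈ V(G2)}} are equal (so a 1-layer K-hop message passing GNN with the shortest-path-distance kernel and constant initial features cannot distinguish G1 from G2), while K iterations of 1-WL color refinement yield different multisets of vertex colors for G1 and G2. Conversely, there exist an integer K > 1 and finite simple graphs G1', G2' with the same number of vertices such that 1-WL yields equal multisets of vertex colors at every iteration (in particular after K iterations), while the multisets {{A^{K,spd}_{v,G1'} : v}} and {{A^{K,spd}_{v,G2'} : v}} differ. -/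

import Mathlib

/-!
`K_{2,3}` and the house graph (a square with a roof) both have two vertices with
configuration `(3, 1)` and three with `(2, 2)`, yet two rounds of 1-WL separate them:
the two degree-`3` vertices of the house are adjacent, those of `K_{2,3}` are not.
The `6`-cycle and two disjoint triangles are both `2`-regular, so 1-WL never separates
them, while a vertex of the cycle has two vertices at distance `2` and a vertex of a
triangle has none.
-/

namespace KHopStmt8

/-- k-th hop neighbors under the shortest-path-distance kernel: vertices at graph
distance exactly `k` from `v`. -/
noncomputable def Qspd {V : Type*} [Fintype V] (G : SimpleGraph V) (v : V) (k : ℕ) :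
    Finset V := by
  classical
  exact Finset.univ.filter fun u => G.Reachable v u ∧ G.dist v u = k

/-- The K-hop node configuration `A^{K,spd}_{v,G} = (|Q^1|, ..., |Q^K|)`. -/
noncomputable def config {V : Type*} [Fintype V] (K : ℕ) (G : SimpleGraph V) (v : V) :
    List ℕ :=
  (List.range K).map fun i => (Qspd G v (i + 1)).card

/-- 1-WL color refinement, expressed as a relation comparing the iteration-`l` colors
of a vertex of `G1` with a vertex of `G2`: all vertices share the constant initial
color, and `c_{l+1}(v) = (c_l(v), {{c_l(u) : u adjacent to v}})`, multiset equality
being expressed by a color-preserving bijection of neighborhoods. -/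
def WLEquiv {V1 V2 : Type*} (G1 : SimpleGraph V1) (G2 : SimpleGraph V2) :
    ℕ → V1 → V2 → Prop
  | 0, _, _ => True
  | (l + 1), v, u => WLEquiv G1 G2 l v u ∧
      ∃ σ : G1.neighborSet v ≃ G2.neighborSet u,
        ∀ w : G1.neighborSet v, WLEquiv G1 G2 l w.1 (σ w).1

open SimpleGraph Finset

section Qspd

variable {V : Type*} [Fintype V] (G : SimpleGraph V)

theorem mem_Qspd {v u : V} {k : ℕ} : u ∈ Qspd G v k ↔ G.edist v u = k := by
  classical
  simp only [Qspd, mem_filter, mem_univ, true_and]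
  constructor
  · rintro ⟨hr, rfl⟩
    exact hr.coe_dist_eq_edist.symm
  · intro h
    have hr : G.Reachable v u := G.edist_ne_top_iff_reachable.mp (by simp [h])
    exact ⟨hr, by exact_mod_cast hr.coe_dist_eq_edist.trans h⟩

theorem Qspd_one [DecidableRel G.Adj] (v : V) : Qspd G v 1 = G.neighborFinset v := by
  ext u
  simp [mem_Qspd, edist_eq_one_iff_adj]

theorem mem_Qspd_two {v u : V} :
    u ∈ Qspd G v 2 ↔ v ≠ u ∧ ¬ G.Adj v u ∧ ∃ w, G.Adj v w ∧ G.Adj u w := by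
  rw [mem_Qspd, Nat.cast_ofNat, edist_eq_two_iff]
  simp [Set.Nonempty, commonNeighbors, neighborSet]

theorem config_two [DecidableEq V] [DecidableRel G.Adj] (v : V) :
    config 2 G v =
      [G.degree v, #{u | v ≠ u ∧ ¬ G.Adj v u ∧ ∃ w, G.Adj v w ∧ G.Adj u w}] := by
  have hQ2 : Qspd G v 2 =
      ({u | v ≠ u ∧ ¬ G.Adj v u ∧ ∃ w, G.Adj v w ∧ G.Adj u w} : Finset V) := by
    ext u
    simp [mem_Qspd_two]
  simp [config, List.range_succ, Qspd_one, hQ2]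

end Qspd

section WL

variable {V₁ V₂ : Type*} {G₁ : SimpleGraph V₁} {G₂ : SimpleGraph V₂}
  [G₁.LocallyFinite] [G₂.LocallyFinite]

theorem WLEquiv.degree_eq {l : ℕ} {v : V₁} {u : V₂} (h : WLEquiv G₁ G₂ (l + 1) v u) :
    G₁.degree v = G₂.degree u := by
  obtain ⟨-, σ, -⟩ := h
  rw [← card_neighborSet_eq_degree, ← card_neighborSet_eq_degree]
  exact Fintype.card_congr σ

theorem WLEquiv.exists_adj_degree_eq {l : ℕ} {v : V₁} {u w : V₂}
    (h : WLEquiv G₁ G₂ (l + 2) v u) (huw : G₂.Adj u w) :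
    ∃ x, G₁.Adj v x ∧ G₁.degree x = G₂.degree w := by
  obtain ⟨-, σ, hσ⟩ := h
  set x := σ.symm ⟨w, huw⟩ with hx
  have hσx : (σ x : V₂) = w := by simp [hx]
  have hdeg := (hσ x).degree_eq
  rw [hσx] at hdeg
  exact ⟨x, x.2, hdeg⟩

theorem wlEquiv_of_isRegularOfDegree {d : ℕ} (h₁ : G₁.IsRegularOfDegree d)
    (h₂ : G₂.IsRegularOfDegree d) : ∀ l v u, WLEquiv G₁ G₂ l v u
  | 0, _, _ => trivial
  | l + 1, v, u =>
    ⟨wlEquiv_of_isRegularOfDegree h₁ h₂ l v u,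
      Fintype.equivOfCardEq (by
        rw [card_neighborSet_eq_degree, card_neighborSet_eq_degree, h₁.degree_eq,
          h₂.degree_eq]),
      fun _ => wlEquiv_of_isRegularOfDegree h₁ h₂ l _ _⟩

end WL

abbrev completeBipartiteTwoThree : SimpleGraph (Fin 5) := fromRel fun a b => a < 2 ∧ 2 ≤ b

/-- The square `0 - 1 - 2 - 3 - 0` with a roof vertex `4` over the edge `0 - 1`. -/
abbrev houseGraph : SimpleGraph (Fin 5) :=
  fromRel fun a b => (a, b) ∈ ({(0, 1), (1, 2), (2, 3), (3, 0), (0, 4), (1, 4)} : Finset _)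

abbrev twoTriangles : SimpleGraph (Fin 6) := fromRel fun a b => a.val / 3 = b.val / 3

theorem config_two_completeBipartiteTwoThree_eq_houseGraph :
    (univ.val.map fun v => config 2 completeBipartiteTwoThree v) =
      univ.val.map fun v => config 2 houseGraph v := by
  simp only [config_two]
  decide

theorem not_forall_wlEquiv_two_completeBipartiteTwoThree_houseGraph (σ : Fin 5 ≃ Fin 5) :
    ¬ ∀ v, WLEquiv completeBipartiteTwoThree houseGraph 2 v (σ v) := by
  intro hσ
  have hroot := hσ (σ.symm 0)
  rw [σ.apply_symm_apply] at hroot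
  obtain ⟨x, hadj, hx⟩ := hroot.exists_adj_degree_eq (w := 1) (by decide)
  have hindep : ∀ a b, completeBipartiteTwoThree.Adj a b →
      completeBipartiteTwoThree.degree a = 3 → completeBipartiteTwoThree.degree b ≠ 3 := by
    decide
  exact hindep _ _ hadj (hroot.degree_eq.trans (by decide)) (hx.trans (by decide))

theorem cycleGraph_six_isRegularOfDegree_two : (cycleGraph 6).IsRegularOfDegree 2 := by
  unfold IsRegularOfDegree
  decide

theorem twoTriangles_isRegularOfDegree_two : twoTriangles.IsRegularOfDegree 2 := by
  unfold IsRegularOfDegree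
  decide

theorem config_two_cycleGraph_six_ne_twoTriangles :
    (univ.val.map fun v => config 2 (cycleGraph 6) v) ≠
      univ.val.map fun v => config 2 twoTriangles v := by
  simp only [config_two]
  decide

/-- There exist `K > 1` and same-size graphs `G1`, `G2` whose multisets
of K-hop spd node configurations agree (so a 1-layer K-hop spd message passing GNN with
constant initial features cannot distinguish them) while K iterations of 1-WL yield
different multisets of vertex colors; conversely there exist `K > 1` and same-size
graphs `G1'`, `G2'` that 1-WL never distinguishes (equal multisets of colors at every
iteration, in particular after K iterations) while the multisets of K-hop spd node
configurations differ. -/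
theorem khop_one_layer_vs_oneWL_incomparable :
    (∃ (K n : ℕ) (G1 G2 : SimpleGraph (Fin n)), 1 < K ∧
      (Finset.univ.val.map fun v => config K G1 v) =
        (Finset.univ.val.map fun v => config K G2 v) ∧
      ¬ ∃ σ : Fin n ≃ Fin n, ∀ v, WLEquiv G1 G2 K v (σ v)) ∧
    (∃ (K n : ℕ) (G1' G2' : SimpleGraph (Fin n)), 1 < K ∧
      (∀ l : ℕ, ∃ σ : Fin n ≃ Fin n, ∀ v, WLEquiv G1' G2' l v (σ v)) ∧
      (Finset.univ.val.map fun v => config K G1' v) ≠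
        (Finset.univ.val.map fun v => config K G2' v)) :=
  ⟨⟨2, 5, completeBipartiteTwoThree, houseGraph, one_lt_two,
      config_two_completeBipartiteTwoThree_eq_houseGraph,
      fun ⟨σ, hσ⟩ => not_forall_wlEquiv_two_completeBipartiteTwoThree_houseGraph σ hσ⟩,
    ⟨2, 6, cycleGraph 6, twoTriangles, one_lt_two,
      fun l => ⟨Equiv.refl _, fun v => wlEquiv_of_isRegularOfDegree
        cycleGraph_six_isRegularOfDegree_two twoTriangles_isRegularOfDegree_two l v v⟩,
      config_two_cycleGraph_six_ne_twoTriangles⟩⟩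

end KHopStmt8
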